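/- The complex number λ_0 = i·√((−1 + √13)/6) is not contained in any cyclotomic field; that is, there is no root of unity ζ such that λ_0 ∈ Q(ζ). -/

import Mathlib

/-!
In an abelian extension `K ⊆ ℂ` of `ℚ` complex conjugation commutes with every automorphism, so
all Galois conjugates of a purely imaginary element are purely imaginary and have nonpositive
squares. If `λ₀` lay in a cyclotomic field `K`, so would `√13 = 1 - 6λ₀²`, and an automorphism
with `√13 ↦ -√13` would send `λ₀` to an element whose square is `(1 + √13)/6 > 0`.
-/

noncomputable def lambda0 : ℂ := Complex.I * Real.sqrt ((-1 + Real.sqrt 13) / 6)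

open ComplexConjugate IntermediateField

theorem IsPrimitiveRoot.isAbelianGalois_adjoin {F L : Type*} [Field F] [Field L] [Algebra F L]
    {n : ℕ} [NeZero n] {ζ : L} (hζ : IsPrimitiveRoot ζ n) : IsAbelianGalois F F⟮ζ⟯ := by
  have : IsCyclotomicExtension {n} F F⟮ζ⟯ := by
    change IsCyclotomicExtension {n} F F⟮ζ⟯.toSubalgebra
    rw [adjoin_simple_toSubalgebra_of_isAlgebraic
      (hζ.isIntegral (NeZero.pos n)).tower_top.isAlgebraic]
    exact hζ.adjoin_isCyclotomicExtension F
  exact IsCyclotomicExtension.isAbelianGalois {n} F F⟮ζ⟯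

theorem exists_algEquiv_apply_eq_neg_of_sq_eq {F K : Type*} [Field F] [Field K] [Algebra F K]
    [Normal F K] {a : F} (ha : ¬IsSquare a) {x : K} (hx : x ^ 2 = algebraMap F K a) :
    ∃ σ : Gal(K/F), σ x = -x := by
  have hirr : Irreducible (Polynomial.X ^ 2 - Polynomial.C a) :=
    X_pow_sub_C_irreducible_of_prime Nat.prime_two fun b hb ↦ ha ⟨b, by rw [← hb, sq]⟩
  have hminpoly : minpoly F x = Polynomial.X ^ 2 - Polynomial.C a :=
    (minpoly.eq_of_irreducible_of_monic hirr (by simp [hx])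
      (Polynomial.monic_X_pow_sub_C a two_ne_zero)).symm
  exact minpoly.exists_algEquiv_of_root' (Algebra.IsAlgebraic.isAlgebraic x)
    (by simp [hminpoly, hx])

namespace IntermediateField

noncomputable def conjAe (K : IntermediateField ℚ ℂ) [Normal ℚ K] : Gal(K/ℚ) :=
  (Complex.conjAe.restrictScalars ℚ).restrictNormal K

variable {K : IntermediateField ℚ ℂ}

@[simp]
theorem coe_conjAe_apply [Normal ℚ K] (x : K) : (K.conjAe x : ℂ) = conj (x : ℂ) :=
  AlgEquiv.restrictNormal_commutes _ K x

open scoped IsMulCommutative in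
theorem conj_coe_algEquiv_apply [IsAbelianGalois ℚ K] (σ : Gal(K/ℚ)) (x : K) :
    conj (σ x : ℂ) = σ (K.conjAe x) := by
  rw [← coe_conjAe_apply, ← AlgEquiv.mul_apply, mul_comm, AlgEquiv.mul_apply]

end IntermediateField

theorem Complex.re_sq_nonpos_of_conj_eq_neg {w : ℂ} (hw : conj w = -w) : (w ^ 2).re ≤ 0 := by
  have hre : w.re = -w.re := by simpa using congrArg Complex.re hw
  simp [sq, show w.re = 0 by linarith, mul_self_nonneg]

theorem lambda0_sq : lambda0 ^ 2 = (1 - Real.sqrt 13) / 6 := by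
  have h : 0 ≤ (-1 + Real.sqrt 13) / 6 := by
    have : (1 : ℝ) ≤ Real.sqrt 13 := Real.one_le_sqrt.mpr (by norm_num)
    linarith
  rw [lambda0, mul_pow, Complex.I_sq, ← Complex.ofReal_pow, Real.sq_sqrt h]
  push_cast
  ring

theorem conj_lambda0 : conj lambda0 = -lambda0 := by
  simp [lambda0]

/-- `λ₀` is not contained in any cyclotomic field `ℚ(ζ)` for a root of unity `ζ`. -/
theorem lambda0_not_cyclotomic :
    ¬ ∃ (n : ℕ) (ζ : ℂ), 0 < n ∧ IsPrimitiveRoot ζ n ∧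
      lambda0 ∈ IntermediateField.adjoin ℚ ({ζ} : Set ℂ) := by
  rintro ⟨n, ζ, hn, hζ, hmem⟩
  have : NeZero n := ⟨hn.ne'⟩
  have : IsAbelianGalois ℚ ℚ⟮ζ⟯ := hζ.isAbelianGalois_adjoin
  set K := ℚ⟮ζ⟯
  let l : K := ⟨lambda0, hmem⟩
  let s : K := 1 - 6 * l ^ 2
  have hs : (s : ℂ) = Real.sqrt 13 := by
    rw [show (s : ℂ) = 1 - 6 * lambda0 ^ 2 from rfl, lambda0_sq]; ring
  have hl : l ^ 2 = (1 - s) / 6 := by simp only [s]; ring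
  obtain ⟨σ, hσ⟩ := exists_algEquiv_apply_eq_neg_of_sq_eq (F := ℚ) (a := 13)
    (by norm_num [Rat.isSquare_ofNat_iff]) (x := s) (by
      apply Subtype.ext
      rw [IntermediateField.coe_pow, hs, ← Complex.ofReal_pow, Real.sq_sqrt (by norm_num)]
      exact (map_ofNat (algebraMap ℚ ℂ) 13).symm)
  have hconj : conj (σ l : ℂ) = -σ l := by
    rw [conj_coe_algEquiv_apply, show K.conjAe l = -l from Subtype.ext (by simp [l, conj_lambda0]),
      map_neg, IntermediateField.coe_neg]
  have hsq : ((σ l : ℂ)) ^ 2 = (1 + Real.sqrt 13) / 6 := by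
    rw [← IntermediateField.coe_pow, ← map_pow, hl, map_div₀, map_sub, map_one, map_ofNat, hσ]
    rw [← hs, sub_neg_eq_add]
    norm_cast
  have hre := Complex.re_sq_nonpos_of_conj_eq_neg hconj
  rw [hsq] at hre
  norm_num at hre
  linarith [Real.sqrt_nonneg 13]
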